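/- Let t > 0, L ≥ 0, s ∈ ℝ, and let 0 ≤ a ≤ b be real numbers. Then ‖∫_{√a}^{√b} e^{i(tμ² + sμ)}·4(1 − e^{iμL})/(e^{iμL} − 3) dμ‖ ≤ t^{−1/2}·2√2·L·(4(2√b − √a) + L(b − a)). -/

import Mathlib

/-!
Completing the square and rescaling by `√t` turns every partial integral of the oscillatory factor
`exp (I * (t * μ ^ 2 + s * μ))` into a Fresnel integral `∫ exp (I * u ^ 2)` divided by `√t`. These
are bounded by `4`: the part over `[1, ∞)` by one integration by parts against `(2 * I * u)⁻¹`,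
and the rest since the integrand is even and of modulus one. A second integration by parts, now
against the amplitude `Ψ(μ) = 4 (1 - e^{iμL}) / (e^{iμL} - 3)`, with `‖Ψ(μ)‖ ≤ 2μL` and
`‖Ψ'‖ ≤ 2L` because `‖e^{iμL} - 3‖ ≥ 2`, bounds the integral by `(4 / √t) (2L√b + 2L(√b - √a))`.
-/

open Complex intervalIntegral Set MeasureTheory

theorem norm_integral_mul_le_of_norm_primitive_le {f g g' : ℝ → ℂ} {c d M : ℝ} (hcd : c ≤ d)
    (hf : Continuous f) (hg : ∀ x ∈ Icc c d, HasDerivAt g (g' x) x)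
    (hg' : IntervalIntegrable g' volume c d) (hM : ∀ x ∈ Icc c d, ‖∫ y in c..x, f y‖ ≤ M) :
    ‖∫ x in c..d, f x * g x‖ ≤ M * (‖g d‖ + ∫ x in c..d, ‖g' x‖) := by
  set F : ℝ → ℂ := fun x => ∫ y in c..x, f y
  have hF : ∀ x, HasDerivAt F (f x) x := fun x =>
    integral_hasDerivAt_right (hf.intervalIntegrable _ _) (hf.stronglyMeasurableAtFilter _ _)
      hf.continuousAt
  have hibp : ∫ x in c..d, f x * g x = g d * F d - ∫ x in c..d, g' x * F x := by
    rw [integral_congr fun x _ => mul_comm (f x) (g x),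
      integral_mul_deriv_eq_deriv_mul (by rwa [uIcc_of_le hcd]) (fun x _ => hF x) hg'
        (hf.intervalIntegrable _ _)]
    simp [F]
  have hrest : ‖∫ x in c..d, g' x * F x‖ ≤ ∫ x in c..d, ‖g' x‖ * M := by
    refine norm_integral_le_of_norm_le hcd (ae_of_all _ fun x hx => ?_) (hg'.norm.mul_const M)
    rw [norm_mul]
    exact mul_le_mul_of_nonneg_left (hM x (Ioc_subset_Icc_self hx)) (norm_nonneg _)
  have hend : ‖g d * F d‖ ≤ ‖g d‖ * M :=
    (norm_mul _ _).trans_le (mul_le_mul_of_nonneg_left (hM d ⟨hcd, le_rfl⟩) (norm_nonneg _))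
  rw [intervalIntegral.integral_mul_const] at hrest
  rw [hibp]
  calc _ ≤ ‖g d * F d‖ + ‖∫ x in c..d, g' x * F x‖ := norm_sub_le _ _
    _ ≤ _ := by linarith

theorem hasDerivAt_cexp_I_mul_sq (x : ℝ) :
    HasDerivAt (fun u : ℝ => exp (I * u ^ 2)) (2 * I * x * exp (I * x ^ 2)) x := by
  have := ((hasDerivAt_pow 2 (x : ℂ)).const_mul I).cexp.comp_ofReal
  convert this using 1
  push_cast
  ring

theorem norm_cexp_I_mul_sq (x : ℝ) : ‖exp (I * x ^ 2)‖ = 1 := by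
  rw [← ofReal_pow, norm_exp_I_mul_ofReal]

theorem norm_integral_cexp_I_mul_sq_le_inv {c d : ℝ} (hc : 0 < c) (hcd : c ≤ d) :
    ‖∫ u in c..d, exp (I * u ^ 2)‖ ≤ c⁻¹ := by
  have hne : ∀ x ∈ Icc c d, (x : ℂ) ≠ 0 := fun x hx => ofReal_ne_zero.2 (hc.trans_le hx.1).ne'
  have hg : ∀ x ∈ Icc c d, HasDerivAt (fun u : ℝ => (2 * I * u)⁻¹) (-(2 * I * x ^ 2)⁻¹) x := by
    intro x hx
    have := (((hasDerivAt_id (x : ℂ)).const_mul (2 * I)).inv (by simp [hne x hx])).comp_ofReal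
    simp only [id, mul_one] at this
    refine this.congr_deriv ?_
    field_simp
  have hnorm_g' : ∀ x : ℝ, ‖-(2 * I * (x : ℂ) ^ 2)⁻¹‖ = (2 * x ^ 2)⁻¹ := by
    intro x
    simp [norm_pow]
  have hprim : ∀ x ∈ Icc c d, ‖∫ u in c..x, 2 * I * u * exp (I * u ^ 2)‖ ≤ 2 := by
    intro x _
    rw [integral_eq_sub_of_hasDerivAt (fun u _ => hasDerivAt_cexp_I_mul_sq u)
      (by apply Continuous.intervalIntegrable; fun_prop)]
    calc _ ≤ ‖exp (I * x ^ 2)‖ + ‖exp (I * c ^ 2)‖ := norm_sub_le _ _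
      _ = 2 := by rw [norm_cexp_I_mul_sq, norm_cexp_I_mul_sq]; norm_num
  have hweight : ∫ x in c..d, ‖-(2 * I * (x : ℂ) ^ 2)⁻¹‖ = (2 * c)⁻¹ - (2 * d)⁻¹ := by
    simp_rw [hnorm_g']
    rw [integral_eq_sub_of_hasDerivAt (f := fun x : ℝ => -(2 * x)⁻¹)]
    · ring
    · intro x hx
      rw [uIcc_of_le hcd] at hx
      have hx0 : x ≠ 0 := (hc.trans_le hx.1).ne'
      have := (((hasDerivAt_id x).const_mul 2).inv (by simp [hx0])).neg
      simp only [id, mul_one] at this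
      exact this.congr_deriv (by field_simp)
    · refine ContinuousOn.intervalIntegrable fun x hx => ?_
      rw [uIcc_of_le hcd] at hx
      have hx0 : x ≠ 0 := (hc.trans_le hx.1).ne'
      exact (continuousAt_const.mul (continuousAt_id.pow 2)).inv₀ (by simp [hx0])
        |>.continuousWithinAt
  have hg' : IntervalIntegrable (fun x : ℝ => -(2 * I * (x : ℂ) ^ 2)⁻¹) volume c d := by
    refine ContinuousOn.intervalIntegrable fun x hx => ?_
    rw [uIcc_of_le hcd] at hx
    exact ((continuous_const.mul (continuous_ofReal.pow 2)).continuousAt.inv₀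
      (by simp [hne x hx])).neg.continuousWithinAt
  calc ‖∫ u in c..d, exp (I * u ^ 2)‖
      = ‖∫ u in c..d, 2 * I * u * exp (I * u ^ 2) * (2 * I * u)⁻¹‖ := by
        congr 1
        refine integral_congr fun x hx => ?_
        rw [uIcc_of_le hcd] at hx
        field_simp [hne x hx]
    _ ≤ 2 * (‖(2 * I * (d : ℂ))⁻¹‖ + ∫ x in c..d, ‖-(2 * I * (x : ℂ) ^ 2)⁻¹‖) :=
        norm_integral_mul_le_of_norm_primitive_le hcd (by fun_prop) hg hg' hprim
    _ = c⁻¹ := by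
        rw [hweight]
        have hd : 0 < d := hc.trans_le hcd
        simp [abs_of_pos hd]
        field_simp

theorem intervalIntegrable_cexp_I_mul_sq (c d : ℝ) :
    IntervalIntegrable (fun u : ℝ => exp (I * u ^ 2)) volume c d :=
  (by fun_prop : Continuous fun u : ℝ => exp (I * u ^ 2)).intervalIntegrable c d

theorem norm_integral_zero_cexp_I_mul_sq_le_of_nonneg {x : ℝ} (hx : 0 ≤ x) :
    ‖∫ u in (0 : ℝ)..x, exp (I * u ^ 2)‖ ≤ 2 := by
  have hsmall : ∀ y, 0 ≤ y → y ≤ 1 → ‖∫ u in (0 : ℝ)..y, exp (I * u ^ 2)‖ ≤ 1 := by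
    intro y hy hy1
    calc _ ≤ 1 * |y - 0| := norm_integral_le_of_norm_le_const fun u _ => (norm_cexp_I_mul_sq u).le
      _ ≤ 1 := by rwa [sub_zero, abs_of_nonneg hy, one_mul]
  rcases le_or_gt x 1 with hx1 | hx1
  · linarith [hsmall x hx hx1]
  · rw [← integral_add_adjacent_intervals (intervalIntegrable_cexp_I_mul_sq 0 1)
      (intervalIntegrable_cexp_I_mul_sq 1 x)]
    calc _ ≤ _ := norm_add_le _ _
      _ ≤ 1 + 1⁻¹ := add_le_add (hsmall 1 zero_le_one le_rfl)
          (norm_integral_cexp_I_mul_sq_le_inv one_pos hx1.le)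
      _ = 2 := by norm_num

theorem integral_zero_neg_cexp_I_mul_sq (x : ℝ) :
    ∫ u in (0 : ℝ)..-x, exp (I * u ^ 2) = -∫ u in (0 : ℝ)..x, exp (I * u ^ 2) := by
  have := integral_comp_neg (a := 0) (b := x) fun u : ℝ => exp (I * u ^ 2)
  simp only [ofReal_neg, neg_sq, neg_zero] at this
  rw [this, integral_symm]

theorem norm_integral_zero_cexp_I_mul_sq_le (x : ℝ) :
    ‖∫ u in (0 : ℝ)..x, exp (I * u ^ 2)‖ ≤ 2 := by
  rcases le_total 0 x with hx | hx
  · exact norm_integral_zero_cexp_I_mul_sq_le_of_nonneg hx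
  · rw [← neg_neg x, integral_zero_neg_cexp_I_mul_sq, norm_neg]
    exact norm_integral_zero_cexp_I_mul_sq_le_of_nonneg (neg_nonneg.2 hx)

theorem norm_integral_cexp_I_mul_sq_le (c d : ℝ) :
    ‖∫ u in c..d, exp (I * u ^ 2)‖ ≤ 4 := by
  rw [← integral_interval_sub_left (intervalIntegrable_cexp_I_mul_sq 0 d)
    (intervalIntegrable_cexp_I_mul_sq 0 c)]
  calc _ ≤ _ := norm_sub_le _ _
    _ ≤ 2 + 2 := add_le_add (norm_integral_zero_cexp_I_mul_sq_le d)
        (norm_integral_zero_cexp_I_mul_sq_le c)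
    _ = 4 := by norm_num

theorem norm_integral_cexp_I_mul_quadratic_le {t : ℝ} (ht : 0 < t) (s c d : ℝ) :
    ‖∫ μ in c..d, exp (I * (t * μ ^ 2 + s * μ))‖ ≤ 4 / Real.sqrt t := by
  set r := Real.sqrt t
  have hr : 0 < r := Real.sqrt_pos.2 ht
  have hr2 : r ^ 2 = t := Real.sq_sqrt ht.le
  set q := s / (2 * r)
  have hsquare : ∀ μ : ℝ, exp (I * (t * μ ^ 2 + s * μ))
      = exp (I * ↑(-q ^ 2)) * exp (I * ↑(r * μ + q) ^ 2) := by
    intro μ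
    have hreal : t * μ ^ 2 + s * μ = -q ^ 2 + (r * μ + q) ^ 2 := by
      simp only [q]
      rw [← hr2]
      field_simp
      ring
    rw [← exp_add, ← mul_add]
    exact_mod_cast congrArg (fun x : ℝ => exp (I * x)) hreal
  rw [integral_congr fun μ _ => hsquare μ, intervalIntegral.integral_const_mul, norm_mul,
    norm_exp_I_mul_ofReal, one_mul,
    integral_comp_mul_add (fun x : ℝ => exp (I * x ^ 2)) hr.ne' q, norm_smul, norm_inv,
    Real.norm_of_nonneg hr.le, div_eq_inv_mul]
  exact mul_le_mul_of_nonneg_left (norm_integral_cexp_I_mul_sq_le _ _) (inv_nonneg.2 hr.le)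

theorem two_le_norm_cexp_I_mul_sub_three (x : ℝ) : 2 ≤ ‖exp (I * x) - 3‖ := by
  have := norm_sub_norm_le (3 : ℂ) (exp (I * x))
  rw [norm_exp_I_mul_ofReal, norm_sub_rev] at this
  norm_num at this
  linarith

noncomputable def tadpoleAmplitude (L μ : ℝ) : ℂ :=
  4 * (1 - exp (I * μ * L)) / (exp (I * μ * L) - 3)

noncomputable def tadpoleAmplitudeDeriv (L μ : ℝ) : ℂ :=
  8 * I * L * exp (I * μ * L) / (exp (I * μ * L) - 3) ^ 2

theorem cexp_I_mul_mul_ofReal (μ L : ℝ) : exp (I * μ * L) = exp (I * ↑(μ * L)) := by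
  rw [ofReal_mul, mul_assoc]

theorem cexp_I_mul_mul_sub_three_ne_zero (μ L : ℝ) : exp (I * μ * L) - 3 ≠ 0 := by
  rw [cexp_I_mul_mul_ofReal, ← norm_pos_iff]
  linarith [two_le_norm_cexp_I_mul_sub_three (μ * L)]

theorem hasDerivAt_tadpoleAmplitude (L μ : ℝ) :
    HasDerivAt (tadpoleAmplitude L) (tadpoleAmplitudeDeriv L μ) μ := by
  have hE : HasDerivAt (fun ν : ℝ => exp (I * ν * L)) (I * L * exp (I * μ * L)) μ := by
    have := (((hasDerivAt_id (μ : ℂ)).const_mul I).mul_const (L : ℂ)).cexp.comp_ofReal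
    simp only [id, mul_one] at this
    exact this.congr_deriv (by ring)
  have hden := cexp_I_mul_mul_sub_three_ne_zero μ L
  refine (((hE.const_sub 1).const_mul 4).div (hE.sub_const 3) hden).congr_deriv ?_
  simp only [tadpoleAmplitudeDeriv]
  field_simp
  ring

theorem continuous_tadpoleAmplitudeDeriv (L : ℝ) : Continuous (tadpoleAmplitudeDeriv L) :=
  Continuous.div (by fun_prop) (by fun_prop) fun μ =>
    pow_ne_zero 2 (cexp_I_mul_mul_sub_three_ne_zero μ L)

theorem norm_tadpoleAmplitudeDeriv_le (L μ : ℝ) : ‖tadpoleAmplitudeDeriv L μ‖ ≤ 2 * |L| := by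
  have h2 := two_le_norm_cexp_I_mul_sub_three (μ * L)
  rw [tadpoleAmplitudeDeriv, cexp_I_mul_mul_ofReal, norm_div, norm_pow, div_le_iff₀ (by positivity)]
  simp only [norm_mul, norm_I, norm_exp_I_mul_ofReal, norm_real, Real.norm_eq_abs, norm_ofNat]
  have h4 : 4 ≤ ‖exp (I * ↑(μ * L)) - 3‖ ^ 2 := by nlinarith
  nlinarith [mul_le_mul_of_nonneg_left h4 (abs_nonneg L)]

theorem norm_tadpoleAmplitude_le (L μ : ℝ) : ‖tadpoleAmplitude L μ‖ ≤ 2 * |μ * L| := by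
  have h2 := two_le_norm_cexp_I_mul_sub_three (μ * L)
  have h1 : ‖1 - exp (I * ↑(μ * L))‖ ≤ |μ * L| := by
    rw [norm_sub_rev]; exact Real.norm_exp_I_mul_ofReal_sub_one_le
  rw [tadpoleAmplitude, cexp_I_mul_mul_ofReal, norm_div, norm_mul, norm_ofNat,
    div_le_iff₀ (by positivity)]
  nlinarith [abs_nonneg (μ * L), norm_nonneg (1 - exp (I * ↑(μ * L)))]

theorem stmt_15_general (t : ℝ) (ht : 0 < t) (L : ℝ) (hL : 0 ≤ L) (s : ℝ)
    (a b : ℝ) (hab : a ≤ b) :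
    ‖∫ μ in Real.sqrt a..Real.sqrt b,
        Complex.exp (I * (t * μ ^ 2 + s * μ))
          * (4 * (1 - Complex.exp (I * μ * L)) / (Complex.exp (I * μ * L) - 3))‖
      ≤ t ^ (-(1 : ℝ) / 2) * 2 * Real.sqrt 2 * L
          * (4 * (2 * Real.sqrt b - Real.sqrt a) + L * (b - a)) := by
  set c := Real.sqrt a
  set d := Real.sqrt b
  have hcd : c ≤ d := Real.sqrt_le_sqrt hab
  have hd : 0 ≤ d := Real.sqrt_nonneg b
  have hvdc := norm_integral_mul_le_of_norm_primitive_le (g := tadpoleAmplitude L) hcd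
    (by fun_prop) (fun μ _ => hasDerivAt_tadpoleAmplitude L μ)
    ((continuous_tadpoleAmplitudeDeriv L).intervalIntegrable c d)
    (fun x _ => norm_integral_cexp_I_mul_quadratic_le ht s c x)
  have hend : ‖tadpoleAmplitude L d‖ ≤ 2 * (d * L) := by
    simpa only [abs_of_nonneg (mul_nonneg hd hL)] using norm_tadpoleAmplitude_le L d
  have hweight : ∫ μ in c..d, ‖tadpoleAmplitudeDeriv L μ‖ ≤ 2 * ((d - c) * L) := by
    simpa [abs_of_nonneg hL] using integral_mono_on hcd
      ((continuous_tadpoleAmplitudeDeriv L).norm.intervalIntegrable (μ := volume) c d)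
      intervalIntegrable_const
      fun μ _ => norm_tadpoleAmplitudeDeriv_le L μ
  have hrpow : t ^ (-(1 : ℝ) / 2) = (Real.sqrt t)⁻¹ := by
    rw [Real.sqrt_eq_rpow, ← Real.rpow_neg ht.le]; norm_num
  have hconst : 8 * (L * (2 * d - c)) ≤ 2 * Real.sqrt 2 * L * (4 * (2 * d - c) + L * (b - a)) := by
    have hsqrt2 : 1 ≤ Real.sqrt 2 := Real.one_le_sqrt.2 one_le_two
    nlinarith [mul_nonneg (mul_nonneg hL (by linarith : 0 ≤ 2 * d - c)) (sub_nonneg.2 hsqrt2),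
      mul_nonneg (Real.sqrt_nonneg 2) (mul_nonneg (mul_nonneg hL hL) (sub_nonneg.2 hab))]
  calc _ ≤ 4 / Real.sqrt t * (2 * (d * L) + 2 * ((d - c) * L)) :=
        hvdc.trans (mul_le_mul_of_nonneg_left (add_le_add hend hweight) (by positivity))
    _ = (Real.sqrt t)⁻¹ * (8 * (L * (2 * d - c))) := by ring
    _ ≤ (Real.sqrt t)⁻¹ * (2 * Real.sqrt 2 * L * (4 * (2 * d - c) + L * (b - a))) :=
        mul_le_mul_of_nonneg_left hconst (inv_nonneg.2 (Real.sqrt_nonneg t))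
    _ = _ := by rw [hrpow]; ring

theorem stmt_15 (t : ℝ) (ht : 0 < t) (L : ℝ) (hL : 0 ≤ L) (s : ℝ)
    (a b : ℝ) (ha : 0 ≤ a) (hab : a ≤ b) :
    ‖∫ μ in Real.sqrt a..Real.sqrt b,
        Complex.exp (I * (t * μ ^ 2 + s * μ))
          * (4 * (1 - Complex.exp (I * μ * L)) / (Complex.exp (I * μ * L) - 3))‖
      ≤ t ^ (-(1 : ℝ) / 2) * 2 * Real.sqrt 2 * L
          * (4 * (2 * Real.sqrt b - Real.sqrt a) + L * (b - a)) :=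
  stmt_15_general t ht L hL s a b hab
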